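/- Let B be a closed S-free convex set in ℝⁿ with f in its interior, and let K = B − f = {x − f : x ∈ B}. Then ρ_K is a valid function, i.e., for every finitely supported function s : ℝⁿ → ℝ≥0 with f + Σ_r r·s_r ∈ S, one has Σ_r ρ_K(r)·s_r ≥ 1. -/

import Mathlib

open scoped BigOperators Pointwise

noncomputable section

/-- Euclidean space `ℝⁿ`. -/
abbrev E (n : ℕ) := EuclideanSpace ℝ (Fin n)

/-- Dot product on `ℝⁿ`. -/
def dot {n : ℕ} (x y : E n) : ℝ := ∑ i, x i * y i

/-- A point with integral coordinates. -/
def IsIntPt {n : ℕ} (x : E n) : Prop := ∀ i, ∃ m : ℤ, x i = (m : ℝ)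

/-- A vector with rational coordinates. -/
def IsRatVec {n : ℕ} (x : E n) : Prop := ∀ i, ∃ q : ℚ, x i = (q : ℝ)

/-- `S` is the set of integral points of a rational polyhedron `{x | Ax ≤ b}`. -/
def IsIntPtsOfRatPolyhedron {n : ℕ} (S : Set (E n)) : Prop :=
  ∃ (m : ℕ) (A : Fin m → E n) (b : Fin m → ℝ),
    (∀ i, IsRatVec (A i)) ∧ (∀ i, ∃ q : ℚ, b i = (q : ℝ)) ∧
    S = {x | IsIntPt x ∧ ∀ i, dot (A i) x ≤ b i}

/-- `dim S = n`: `S` contains `n+1` affinely independent points. -/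
def FullDimSet {n : ℕ} (S : Set (E n)) : Prop :=
  ∃ p : Fin (n + 1) → E n, (∀ i, p i ∈ S) ∧ AffineIndependent ℝ p

/-- `B` is `S`-free: the interior of `B` contains no point of `S`. -/
def SFree {n : ℕ} (S B : Set (E n)) : Prop := ∀ x ∈ interior B, x ∉ S

/-- `B` is a maximal `S`-free convex set. -/
def MaxSFree {n : ℕ} (S B : Set (E n)) : Prop :=
  Convex ℝ B ∧ SFree S B ∧
    ∀ C : Set (E n), Convex ℝ C → SFree S C → B ⊆ C → B = C

/-- `B` is lattice-free: no integral point in its interior. -/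
def LatticeFree {n : ℕ} (B : Set (E n)) : Prop := ∀ x ∈ interior B, ¬ IsIntPt x

/-- `B` is a maximal lattice-free convex set. -/
def MaxLatticeFree {n : ℕ} (B : Set (E n)) : Prop :=
  Convex ℝ B ∧ LatticeFree B ∧
    ∀ C : Set (E n), Convex ℝ C → LatticeFree C → B ⊆ C → B = C

/-- A polyhedron: finite intersection of closed half-spaces. -/
def IsPolyhedron {n : ℕ} (B : Set (E n)) : Prop :=
  ∃ (m : ℕ) (a : Fin m → E n) (c : Fin m → ℝ), B = {x | ∀ i, dot (a i) x ≤ c i}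

/-- A polytope: convex hull of finitely many points. -/
def IsPolytope {n : ℕ} (P : Set (E n)) : Prop :=
  ∃ V : Finset (E n), P = convexHull ℝ (V : Set (E n))

/-- Dimension of a set: dimension of its affine hull. -/
def sdim {n : ℕ} (A : Set (E n)) : ℕ := Module.finrank ℝ (affineSpan ℝ A).direction

/-- `F` is a face of the convex set `B`. -/
def IsFaceOf {n : ℕ} (F B : Set (E n)) : Prop :=
  F ⊆ B ∧ Convex ℝ F ∧ ∀ x ∈ B, ∀ y ∈ B, ∀ t : ℝ, 0 < t → t < 1 →
    t • x + (1 - t) • y ∈ F → x ∈ F ∧ y ∈ F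

/-- `F` is a facet of `B`: a nonempty face of dimension `dim B - 1`. -/
def IsFacetOf {n : ℕ} (F B : Set (E n)) : Prop :=
  IsFaceOf F B ∧ F.Nonempty ∧ sdim F + 1 = sdim B

/-- Recession cone of `K`. -/
def recCone {n : ℕ} (K : Set (E n)) : Set (E n) :=
  {d | ∀ x ∈ K, ∀ t : ℝ, 0 ≤ t → x + t • d ∈ K}

/-- Lineality space of `K`. -/
def linSpace {n : ℕ} (K : Set (E n)) : Set (E n) :=
  {d | d ∈ recCone K ∧ -d ∈ recCone K}

/-- The set of all finite nonnegative combinations of elements of `G`. -/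
def conicHullOf {n : ℕ} (G : Set (E n)) : Set (E n) :=
  {x | ∃ (m : ℕ) (c : Fin m → ℝ) (v : Fin m → E n),
    (∀ i, 0 ≤ c i) ∧ (∀ i, v i ∈ G) ∧ x = ∑ i, c i • v i}

/-- A cone is rational if it is generated by vectors with rational coordinates. -/
def IsRationalCone {n : ℕ} (C : Set (E n)) : Prop :=
  ∃ G : Set (E n), (∀ v ∈ G, IsRatVec v) ∧ C = conicHullOf G

/-- A linear subspace is rational if it is spanned by rational vectors. -/
def IsRationalSubspace {n : ℕ} (L : Submodule ℝ (E n)) : Prop :=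
  ∃ G : Set (E n), (∀ v ∈ G, IsRatVec v) ∧ L = Submodule.span ℝ G

/-- The hyperplane `{x | a·x = β}` is a supporting hyperplane of `C`. -/
def IsSupportingHyperplane {n : ℕ} (a : E n) (β : ℝ) (C : Set (E n)) : Prop :=
  ((∀ x ∈ C, dot a x ≤ β) ∨ (∀ x ∈ C, β ≤ dot a x)) ∧
    ∃ x ∈ closure C, dot a x = β

/-- `ψ` is a valid function with respect to `f` and `S`. -/
def ValidFn {n : ℕ} (S : Set (E n)) (f : E n) (ψ : E n → ℝ) : Prop :=
  ∀ s : (E n) →₀ ℝ, (∀ r, 0 ≤ s r) →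
    (f + s.sum fun r c => c • r) ∈ S →
    1 ≤ s.sum fun r c => ψ r * c

/-- Sublinear: positively homogeneous and subadditive. -/
def Sublinear {n : ℕ} (ψ : E n → ℝ) : Prop :=
  (∀ t : ℝ, 0 ≤ t → ∀ r, ψ (t • r) = t * ψ r) ∧
  (∀ r r', ψ (r + r') ≤ ψ r + ψ r')

/-- Polar of `K`. -/
def polar {n : ℕ} (K : Set (E n)) : Set (E n) := {y | ∀ r ∈ K, dot y r ≤ 1}

/-- `K̂ = {y ∈ K* | ∃ x ∈ K, x·y = 1}`. -/
def Khat {n : ℕ} (K : Set (E n)) : Set (E n) :=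
  {y | y ∈ polar K ∧ ∃ x ∈ K, dot x y = 1}

/-- `ρ_K(r) = sup { y·r | y ∈ K̂ }`. -/
def rho {n : ℕ} (K : Set (E n)) (r : E n) : ℝ :=
  sSup ((fun y => dot y r) '' Khat K)

/-!
Write `K = B - f` and `z = ∑ s_r r`. Since `f + z ∈ S` and `B` is `S`-free, `z ∉ int K`, so the
gauge of `K` at `z` is at least `1` and `p = z / gauge_K(z)` is a boundary point of `K`. A
supporting hyperplane of `K` at `p`, normalized to `y · p = 1`, gives `y ∈ K̂` with
`y · z = gauge_K(z) ≥ 1`, hence `∑ ρ_K(r) s_r ≥ ∑ (y · r) s_r = y · z ≥ 1`.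
-/

lemma dot_eq_inner {n : ℕ} (x y : E n) : dot x y = inner ℝ x y := by
  simp [dot, PiLp.inner_apply, RCLike.inner_apply, mul_comm]

lemma dot_comm {n : ℕ} (x y : E n) : dot x y = dot y x := by
  simp only [dot, mul_comm]

lemma dot_finsuppSum {n : ℕ} (y : E n) (s : E n →₀ ℝ) :
    dot y (s.sum fun r c => c • r) = s.sum fun r c => dot y r * c := by
  simp only [Finsupp.sum, dot_eq_inner, inner_sum, real_inner_smul_right, mul_comm]

section Polar

variable {n : ℕ} {K : Set (E n)}

lemma norm_le_inv_of_mem_polar {ε : ℝ} (hε : 0 < ε) (hK : Metric.closedBall 0 ε ⊆ K)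
    {y : E n} (hy : y ∈ polar K) : ‖y‖ ≤ ε⁻¹ := by
  rcases eq_or_ne y 0 with rfl | hy0
  · simp [hε.le]
  have hny : 0 < ‖y‖ := norm_pos_iff.mpr hy0
  have hmem : (ε / ‖y‖) • y ∈ K := hK <| by
    rw [mem_closedBall_zero_iff, norm_smul, Real.norm_of_nonneg (by positivity),
      div_mul_cancel₀ _ hny.ne']
  have h := hy _ hmem
  rw [dot_eq_inner, real_inner_smul_right, real_inner_self_eq_norm_sq] at h
  rw [le_inv_comm₀ hny hε]
  calc ε = ε / ‖y‖ * ‖y‖ ^ 2 / ‖y‖ := by field_simp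
    _ ≤ 1 / ‖y‖ := by gcongr
    _ = ‖y‖⁻¹ := one_div _

lemma bddAbove_dot_image_polar (hK : K ∈ nhds 0) (r : E n) :
    BddAbove ((fun y => dot y r) '' polar K) := by
  obtain ⟨ε, hε, hball⟩ := Metric.nhds_basis_closedBall.mem_iff.mp hK
  refine ⟨ε⁻¹ * ‖r‖, ?_⟩
  rintro _ ⟨y, hy, rfl⟩
  calc dot y r = inner ℝ y r := dot_eq_inner y r
    _ ≤ ‖y‖ * ‖r‖ := real_inner_le_norm y r
    _ ≤ ε⁻¹ * ‖r‖ := by gcongr; exact norm_le_inv_of_mem_polar hε hball hy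

lemma dot_le_rho (hK : K ∈ nhds 0) {y : E n} (hy : y ∈ Khat K) (r : E n) :
    dot y r ≤ rho K r :=
  le_csSup ((bddAbove_dot_image_polar hK r).mono (Set.image_mono fun _ h => h.1)) ⟨y, hy, rfl⟩

lemma exists_mem_Khat_dot_eq_one (hconv : Convex ℝ K) (h0 : (0 : E n) ∈ interior K)
    {p : E n} (hpK : p ∈ K) (hp : p ∉ interior K) : ∃ y ∈ Khat K, dot y p = 1 := by
  obtain ⟨φ, hφ⟩ := geometric_hahn_banach_open_point hconv.interior isOpen_interior hp
  have hφp : 0 < φ p := by simpa using hφ 0 h0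
  -- `K` lies in the closure of its interior, on which `φ < φ p`.
  have hφK : ∀ r ∈ K, φ r ≤ φ p := by
    have hsub : K ⊆ closure (interior K) := by
      rw [hconv.closure_interior_eq_closure_of_nonempty_interior ⟨0, h0⟩]
      exact subset_closure
    exact fun r hr => closure_minimal (fun x hx => (hφ x hx).le)
      (isClosed_le φ.continuous continuous_const) (hsub hr)
  set y : E n := (φ p)⁻¹ • (InnerProductSpace.toDual ℝ (E n)).symm φ
  have hy : ∀ r, dot y r = (φ p)⁻¹ * φ r := fun r => by
    rw [dot_eq_inner, real_inner_smul_left, InnerProductSpace.toDual_symm_apply]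
  have hyp : dot y p = 1 := by rw [hy, inv_mul_cancel₀ hφp.ne']
  refine ⟨y, ⟨fun r hr => ?_, p, hpK, by rw [dot_comm, hyp]⟩, hyp⟩
  rw [hy, inv_mul_le_one₀ hφp]
  exact hφK r hr

lemma exists_mem_Khat_one_le_dot (hcl : IsClosed K) (hconv : Convex ℝ K)
    (h0 : (0 : E n) ∈ interior K) {z : E n} (hz : z ∉ interior K) :
    ∃ y ∈ Khat K, 1 ≤ dot y z := by
  have hK : K ∈ nhds 0 := mem_interior_iff_mem_nhds.mp h0
  have hg : 1 ≤ gauge K z := not_lt.mp fun h => hz ((gauge_lt_one_iff_mem_interior hconv hK).mp h)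
  have hg0 : 0 < gauge K z := zero_lt_one.trans_le hg
  set p := (gauge K z)⁻¹ • z
  have hpfr : p ∈ frontier K := by
    rw [← gauge_eq_one_iff_mem_frontier hconv hK, gauge_smul_of_nonneg (inv_nonneg.mpr hg0.le),
      smul_eq_mul, inv_mul_cancel₀ hg0.ne']
  obtain ⟨y, hy, hyp⟩ := exists_mem_Khat_dot_eq_one hconv h0 (hcl.frontier_subset hpfr) hpfr.2
  refine ⟨y, hy, ?_⟩
  have hzp : z = gauge K z • p := by rw [smul_inv_smul₀ hg0.ne']
  rw [hzp, dot_eq_inner, real_inner_smul_right, ← dot_eq_inner, hyp, mul_one]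
  exact hg

theorem one_le_sum_rho_of_notMem_interior (hcl : IsClosed K) (hconv : Convex ℝ K)
    (h0 : (0 : E n) ∈ interior K) {s : E n →₀ ℝ} (hs : ∀ r, 0 ≤ s r)
    (hz : (s.sum fun r c => c • r) ∉ interior K) : 1 ≤ s.sum fun r c => rho K r * c := by
  obtain ⟨y, hy, hyz⟩ := exists_mem_Khat_one_le_dot hcl hconv h0 hz
  calc 1 ≤ dot y (s.sum fun r c => c • r) := hyz
    _ = s.sum fun r c => dot y r * c := dot_finsuppSum y s
    _ ≤ s.sum fun r c => rho K r * c := Finset.sum_le_sum fun r _ =>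
        mul_le_mul_of_nonneg_right (dot_le_rho (mem_interior_iff_mem_nhds.mp h0) hy r) (hs r)

end Polar

theorem stmt_14_general {n : ℕ} (S : Set (E n)) (f : E n)
    (B : Set (E n)) (hcl : IsClosed B) (hconv : Convex ℝ B)
    (hfree : SFree S B) (hfB : f ∈ interior B) :
    ValidFn S f (rho ((fun x => x - f) '' B)) := by
  let τ := Homeomorph.subRight f
  have hτ : (fun x => x - f) '' B = (fun x => -f + x) '' B := by simp only [sub_eq_neg_add]
  intro s hs hmem
  refine one_le_sum_rho_of_notMem_interior (τ.isClosedMap B hcl) (hτ ▸ hconv.translate (-f))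
    ?_ hs ?_ <;> rw [← τ.image_interior]
  · exact ⟨f, hfB, sub_self f⟩
  · rintro ⟨x, hx, hxz⟩
    exact hfree x hx (by simpa [τ, ← hxz] using hmem)

/-- If B is a closed S-free convex set with f in its interior and K = B - f,
then ρ_K is a valid function. -/
theorem stmt_14 {n : ℕ} (S : Set (E n)) (hS : IsIntPtsOfRatPolyhedron S)
    (hdim : FullDimSet S) (f : E n) (hf : f ∈ convexHull ℝ S) (hfi : ¬ IsIntPt f)
    (B : Set (E n)) (hcl : IsClosed B) (hconv : Convex ℝ B)
    (hfree : SFree S B) (hfB : f ∈ interior B) :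
    ValidFn S f (rho ((fun x => x - f) '' B)) :=
  stmt_14_general S f B hcl hconv hfree hfB
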